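/- Let (B, K) be a formal basket datum with χ = 1 whose formal plurigenera P(m) are non-negative integers for every integer m ≥ 2. If P(2) = 0 and B contains a basket of index r ≥ 28, then P(18) ≥ 3. -/

import Mathlib

/-!
With `c̄ = c mod r` and `t(c) = c̄ (r - c̄)` we have `l(r, b, m) = ∑_{j<m} t(b j) / 2r`.
Since `t(e) ≤ t(c) + t(c + e)`, pairing the terms `j = 2i, 2i + 1` gives `l(Q, 18) ≥ 9 l(Q, 2)`
for every basket. From `P(2) = 0` we get `∑ l(Q, 2) = 3 - K/2 < 3`, so a basket of index `r ≥ 28`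
has `b (r - b) < 6 r`; as `t` is invariant under `b ↦ r - b` we may take `b ≤ 8`, and then a direct
computation (exhaustive for `r < 137`) sharpens the bound to `l(Q, 18) ≥ 9 l(Q, 2) + 10`. Hence
`P(18) = 1785 K / 2 - 35 + ∑ l(Q, 18) ≥ 888 K + 2 > 2`, and `P(18)` is an integer.
-/

/-- The Reid correction term `l(r, b, m) = ∑_{j=1}^{m-1} \overline{bj}(r-\overline{bj})/(2r)`,
where `\overline{bj}` is the smallest non-negative residue of `b*j` mod `r`.
(The `j = 0` term vanishes, so we may sum over `j ∈ range m`.) -/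
def reidL (r b m : ℕ) : ℚ :=
  ∑ j ∈ Finset.range m,
    (((b * j) % r : ℕ) : ℚ) * ((r : ℚ) - (((b * j) % r : ℕ) : ℚ)) / (2 * r)

/-- A basket of type `1/r(a, -a, 1)`: a pair of integers `(r, a)` with `r ≥ 2`,
`0 < a < r` and `gcd(a, r) = 1`. -/
structure Basket where
  r : ℕ
  a : ℕ
  two_le_r : 2 ≤ r
  a_pos : 0 < a
  a_lt_r : a < r
  coprime : Nat.Coprime a r

/-- The unique `b` with `0 < b < r` and `a * b ≡ 1 (mod r)`. -/
def Basket.binv (Q : Basket) : ℕ := ((Q.a : ZMod Q.r)⁻¹).val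

/-- The correction term `l(Q, m)` of a basket. -/
def Basket.l (Q : Basket) (m : ℕ) : ℚ := reidL Q.r Q.binv m

/-- `Δ_n(Q) := n² l(Q,2) + l(Q,n) - l(Q,n+1)`. -/
def Basket.delta (Q : Basket) (n : ℕ) : ℚ :=
  (n : ℚ) ^ 2 * Q.l 2 + Q.l n - Q.l (n + 1)

/-- A formal basket datum with `χ = 1`: a finite multiset of baskets together
with a positive rational number `K`. -/
structure FormalDatum where
  B : Multiset Basket
  K : ℚ
  K_pos : 0 < K

/-- The formal plurigenus `P(m) = (1/12)m(m-1)(2m-1)K - (2m-1) + ∑_{Q ∈ B} l(Q, m)`. -/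
def FormalDatum.P (D : FormalDatum) (m : ℕ) : ℚ :=
  (1 / 12 : ℚ) * m * (m - 1) * (2 * m - 1) * D.K - (2 * m - 1)
    + (D.B.map (fun Q => Q.l m)).sum

open Finset

def reidTerm (r c : ℕ) : ℕ := c % r * (r - c % r)

lemma reidTerm_zero (r : ℕ) : reidTerm r 0 = 0 := by simp [reidTerm]

lemma reidTerm_of_lt {r c : ℕ} (h : c < r) : reidTerm r c = c * (r - c) := by
  rw [reidTerm, Nat.mod_eq_of_lt h]

lemma reidTerm_eq_of_dvd_add {r c d : ℕ} (h : r ∣ c + d) : reidTerm r c = reidTerm r d := by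
  have hmod := Nat.add_mod_eq_ite (k := r) (m := c) (n := d)
  rw [Nat.mod_eq_zero_of_dvd h] at hmod
  unfold reidTerm
  split_ifs at hmod
  · rw [show r - c % r = d % r by omega, show r - d % r = c % r by omega, mul_comm]
  · rw [show c % r = 0 by omega, show d % r = 0 by omega]

lemma reidTerm_le_add (r c e : ℕ) : reidTerm r e ≤ reidTerm r c + reidTerm r (c + e) := by
  rcases Nat.eq_zero_or_pos r with rfl | hr
  · simp [reidTerm]
  have hc := Nat.mod_lt c hr
  have he := Nat.mod_lt e hr
  have hmod := Nat.add_mod_eq_ite (k := r) (m := c) (n := e)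
  unfold reidTerm
  rw [hmod]
  split_ifs with hwrap
  · zify [hc.le, he.le, hwrap, (show c % r + e % r - r ≤ r by omega)]
    nlinarith [mul_nonneg (by omega : (0 : ℤ) ≤ c % r + e % r - r) (by omega : (0 : ℤ) ≤ r - c % r)]
  · zify [hc.le, he.le, (show c % r + e % r ≤ r by omega)]
    nlinarith [mul_nonneg (by omega : (0 : ℤ) ≤ c % r) (by omega : (0 : ℤ) ≤ r - c % r - e % r)]

lemma mul_reidTerm_le_sum_range (r b n : ℕ) :
    n * reidTerm r b ≤ ∑ j ∈ range (2 * n), reidTerm r (b * j) := by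
  induction n with
  | zero => simp
  | succ n ih =>
    have hpair := reidTerm_le_add r (b * (2 * n)) b
    rw [← mul_add_one] at hpair
    rw [show 2 * (n + 1) = 2 * n + 1 + 1 by ring, sum_range_succ, sum_range_succ]
    linarith

-- For `r ≥ 137 > 17 * 8` no multiple `b j`, `j < 18`, wraps around modulo `r`; below, check all cases.
set_option maxRecDepth 100000 in
lemma sum_reidTerm_ge_of_lt_137 : ∀ r < 137, ∀ b < 9, 28 ≤ r → 0 < b → reidTerm r b < 6 * r →
    9 * reidTerm r b + 20 * r ≤ ∑ j ∈ range 18, reidTerm r (b * j) := by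
  decide

lemma sum_reidTerm_ge_of_le_half {r b : ℕ} (hr : 28 ≤ r) (hb : 0 < b) (hbr : 2 * b ≤ r)
    (hsmall : reidTerm r b < 6 * r) :
    9 * reidTerm r b + 20 * r ≤ ∑ j ∈ range 18, reidTerm r (b * j) := by
  have hb8 : b ≤ 8 := by
    rw [reidTerm_of_lt (by omega)] at hsmall
    by_contra! hb9
    have hb12 : b < 12 := by
      by_contra! hb12
      have := Nat.mul_le_mul_right (r - b) hb12
      omega
    interval_cases b <;> omega
  rcases Nat.lt_or_ge r 137 with hlt | hge
  · exact sum_reidTerm_ge_of_lt_137 r hlt b (by omega) hr hb hsmall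
  rw [reidTerm_of_lt (by omega)]
  have hterm : ∀ j ∈ range 18, (reidTerm r (b * j) : ℤ) = b * j * (r - b * j) := by
    intro j hj
    have hlt : b * j < r := by
      have := Nat.mul_le_mul hb8 (Nat.lt_succ_iff.mp (mem_range.mp hj))
      omega
    rw [reidTerm_of_lt hlt]
    push_cast [hlt.le]
    ring
  have hsum : ∑ j ∈ range 18, (b * j * (r - b * j) : ℤ) = 153 * b * r - 1785 * b ^ 2 := by
    simp only [sum_range_succ, sum_range_zero]
    push_cast
    ring
  zify [(show b ≤ r by omega)]
  rw [sum_congr rfl hterm, hsum]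
  have hb' : (1 : ℤ) ≤ b := by exact_mod_cast hb
  have hb8' : (b : ℤ) ≤ 8 := by exact_mod_cast hb8
  have hr' : (137 : ℤ) ≤ r := by exact_mod_cast hge
  nlinarith [mul_nonneg (by linarith : (0 : ℤ) ≤ b - 1) (by linarith : (0 : ℤ) ≤ 144 * r - 1776 * b)]

lemma reidTerm_sub_mul {r b : ℕ} (hbr : b ≤ r) (j : ℕ) :
    reidTerm r ((r - b) * j) = reidTerm r (b * j) := by
  apply reidTerm_eq_of_dvd_add
  rw [← add_mul, Nat.sub_add_cancel hbr]
  exact dvd_mul_right r j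

lemma sum_reidTerm_ge {r b : ℕ} (hr : 28 ≤ r) (hb : 0 < b) (hbr : b < r)
    (hsmall : reidTerm r b < 6 * r) :
    9 * reidTerm r b + 20 * r ≤ ∑ j ∈ range 18, reidTerm r (b * j) := by
  rcases le_or_gt (2 * b) r with hle | hgt
  · exact sum_reidTerm_ge_of_le_half hr hb hle hsmall
  have hsymm : reidTerm r (r - b) = reidTerm r b := by
    simpa using reidTerm_sub_mul hbr.le 1
  have := sum_reidTerm_ge_of_le_half hr (by omega) (by omega) (hsymm ▸ hsmall)
  rwa [hsymm, sum_congr rfl fun j _ => reidTerm_sub_mul hbr.le j] at this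

lemma reidL_eq_sum_reidTerm {r : ℕ} (hr : 0 < r) (b m : ℕ) :
    reidL r b m = (∑ j ∈ range m, reidTerm r (b * j) : ℕ) / (2 * r) := by
  rw [reidL, Nat.cast_sum, sum_div]
  refine sum_congr rfl fun j _ => ?_
  rw [reidTerm, Nat.cast_mul, Nat.cast_sub (Nat.mod_lt _ hr).le]

lemma reidL_two {r : ℕ} (hr : 0 < r) (b : ℕ) : reidL r b 2 = reidTerm r b / (2 * r) := by
  simp [reidL_eq_sum_reidTerm hr, sum_range_succ, reidTerm_zero]

namespace Basket

variable (Q : Basket)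

lemma r_pos : 0 < Q.r := by have := Q.two_le_r; omega

lemma binv_lt : Q.binv < Q.r :=
  have : NeZero Q.r := ⟨Q.r_pos.ne'⟩
  ZMod.val_lt _

lemma binv_pos : 0 < Q.binv := by
  have : Fact (1 < Q.r) := ⟨Q.two_le_r⟩
  refine ZMod.val_pos.mpr fun h => zero_ne_one (α := ZMod Q.r) ?_
  rw [← ZMod.coe_mul_inv_eq_one _ Q.coprime, h, mul_zero]

lemma l_eq (m : ℕ) : Q.l m = (∑ j ∈ range m, reidTerm Q.r (Q.binv * j) : ℕ) / (2 * Q.r) :=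
  reidL_eq_sum_reidTerm Q.r_pos _ _

lemma l_two : Q.l 2 = reidTerm Q.r Q.binv / (2 * Q.r) := reidL_two Q.r_pos _

lemma l_nonneg (m : ℕ) : 0 ≤ Q.l m := by
  rw [l_eq]
  positivity

lemma nine_mul_l_two_le : 9 * Q.l 2 ≤ Q.l 18 := by
  rw [l_two, l_eq, ← mul_div_assoc]
  gcongr
  exact_mod_cast mul_reidTerm_le_sum_range Q.r Q.binv 9

lemma nine_mul_l_two_add_ten_le (hr : 28 ≤ Q.r) (hl : Q.l 2 < 3) :
    9 * Q.l 2 + 10 ≤ Q.l 18 := by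
  have hr0 : (0 : ℚ) < 2 * Q.r := by have := Q.r_pos; positivity
  rw [l_two, div_lt_iff₀ hr0] at hl
  have hsmall : reidTerm Q.r Q.binv < 6 * Q.r := by
    exact_mod_cast (show (reidTerm Q.r Q.binv : ℚ) < 6 * Q.r by linarith)
  have hsum : (9 * reidTerm Q.r Q.binv + 20 * Q.r : ℚ) ≤
      (∑ j ∈ range 18, reidTerm Q.r (Q.binv * j) : ℕ) := by
    exact_mod_cast sum_reidTerm_ge hr Q.binv_pos Q.binv_lt hsmall
  rw [l_two, l_eq, le_div_iff₀ hr0]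
  calc (9 * ((reidTerm Q.r Q.binv : ℚ) / (2 * Q.r)) + 10) * (2 * Q.r)
      = 9 * reidTerm Q.r Q.binv + 20 * Q.r := by field_simp; ring
    _ ≤ _ := hsum

end Basket

lemma Basket.l_le_sum_l {B : Multiset Basket} {Q : Basket} (hQ : Q ∈ B) (m : ℕ) :
    Q.l m ≤ (B.map fun Q => Q.l m).sum :=
  Multiset.single_le_sum (by simp [Basket.l_nonneg]) _ (Multiset.mem_map_of_mem _ hQ)

lemma nine_mul_sum_l_two_add_ten_le {B : Multiset Basket} {Q : Basket} (hQ : Q ∈ B)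
    (hr : 28 ≤ Q.r) (hl : Q.l 2 < 3) :
    9 * (B.map fun Q => Q.l 2).sum + 10 ≤ (B.map fun Q => Q.l 18).sum := by
  have hexcess := Multiset.single_le_sum (s := B.map fun Q => Q.l 18 - 9 * Q.l 2)
    (by simp [Basket.nine_mul_l_two_le]) _ (Multiset.mem_map_of_mem _ hQ)
  rw [Multiset.sum_map_sub, Multiset.sum_map_mul_left] at hexcess
  linarith [Q.nine_mul_l_two_add_ten_le hr hl]

lemma FormalDatum.P_two (D : FormalDatum) :
    D.P 2 = D.K / 2 - 3 + (D.B.map fun Q => Q.l 2).sum := by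
  rw [FormalDatum.P]
  push_cast
  ring

lemma FormalDatum.P_eighteen (D : FormalDatum) :
    D.P 18 = 1785 / 2 * D.K - 35 + (D.B.map fun Q => Q.l 18).sum := by
  rw [FormalDatum.P]
  push_cast
  ring

/-- If the formal plurigenera of a formal basket datum with `χ = 1` are
non-negative integers, `P(2) = 0`, and the multiset contains a basket of index
`r ≥ 28`, then `P(18) ≥ 3`. -/
theorem formal_P_eighteen_ge_three (D : FormalDatum)
    (hint : ∀ m : ℕ, 2 ≤ m → ∃ k : ℕ, D.P m = (k : ℚ))
    (h2 : D.P 2 = 0) (hQ : ∃ Q ∈ D.B, 28 ≤ Q.r) :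
    3 ≤ D.P 18 := by
  obtain ⟨Q, hQB, hr⟩ := hQ
  have hK := D.K_pos
  rw [D.P_two] at h2
  have hl : Q.l 2 < 3 := by linarith [Basket.l_le_sum_l hQB 2]
  have h18 := nine_mul_sum_l_two_add_ten_le hQB hr hl
  obtain ⟨k, hk⟩ := hint 18 (by norm_num)
  have hk2 : (2 : ℚ) < k := by rw [← hk, D.P_eighteen]; linarith
  rw [hk]
  exact_mod_cast (show 3 ≤ k by exact_mod_cast hk2)
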